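/- Let G ⊂ SL(3,C) be the cyclic group of order n generated by g = diag(e^{2πiλ_1/n}, e^{2πiλ_2/n}, e^{2πiλ_3/n}) with 0 < λ_1, λ_2, λ_3 < n, λ_1+λ_2+λ_3 = n, and gcd(λ_1,λ_2,λ_3) = 1. Then the number of elements of G of weight 1 is (1/2)(n + Σ_{i=1}^3 gcd(λ_i,n)) − 2 and the number of elements of weight 2 is (1/2)(n − Σ_{i=1}^3 gcd(λ_i,n)) + 1. -/

import Mathlib

open Finset

lemma fract_mul_div (k m n : ℕ) (hn : 0 < n) :
    Int.fract (((k:ℚ) * m) / n) = ((k * m % n : ℕ) : ℚ) / n := by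
  have h : k * m = n * (k * m / n) + k * m % n := (Nat.div_add_mod (k*m) n).symm
  have hc : ((k:ℚ) * m) = n * (k * m / n : ℕ) + ((k * m % n : ℕ):ℚ) := by
    exact_mod_cast congrArg (Nat.cast : ℕ → ℚ) h
  have hn' : (n:ℚ) ≠ 0 := Nat.cast_ne_zero.mpr hn.ne'
  have : ((k:ℚ) * m) / n = ((k * m / n : ℕ) : ℚ) + ((k * m % n : ℕ):ℚ)/n := by
    rw [hc]; field_simp
  rw [this, Int.fract_natCast_add, Int.fract_eq_self.mpr]
  constructor
  · positivity
  · rw [div_lt_one (by positivity)]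
    exact_mod_cast Nat.mod_lt _ hn

lemma fract_zero_iff (k m n : ℕ) (hn : 0 < n) :
    Int.fract (((k:ℚ) * m) / n) = 0 ↔ n ∣ k * m := by
  rw [fract_mul_div k m n hn, div_eq_zero_iff]
  have hn' : (n:ℚ) ≠ 0 := Nat.cast_ne_zero.mpr hn.ne'
  simp only [hn', or_false, Nat.cast_eq_zero]
  exact Nat.dvd_iff_mod_eq_zero.symm

lemma fract_reflect (k m n : ℕ) (hn : 0 < n) (hk : k ≤ n)
    (h : Int.fract (((k:ℚ) * m) / n) ≠ 0) :
    Int.fract ((((n - k : ℕ):ℚ) * m) / n) = 1 - Int.fract (((k:ℚ) * m) / n) := by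
  have hn' : (n:ℚ) ≠ 0 := Nat.cast_ne_zero.mpr hn.ne'
  have : (((n-k:ℕ):ℚ) * m) / n = (m:ℚ) + (-(((k:ℚ)*m)/n)) := by
    rw [Nat.cast_sub hk]; field_simp; ring
  rw [this, Int.fract_natCast_add, Int.fract_neg h]


lemma card_dvd_Ico (m n : ℕ) (hn : 0 < n) :
    ((Finset.Ico 1 n).filter (fun k => n ∣ k * m)).card = Nat.gcd m n - 1 := by
  set g := Nat.gcd n m with hg
  have hg0 : 0 < g := Nat.gcd_pos_of_pos_left m hn
  set e := n / g with he'
  have he : e * g = n := Nat.div_mul_cancel (Nat.gcd_dvd_left n m)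
  have he0 : 0 < e := Nat.div_pos (Nat.le_of_dvd hn (Nat.gcd_dvd_left n m)) hg0
  have key : ∀ k, (n ∣ k * m ↔ e ∣ k) := by
    intro k
    rw [← Nat.dvd_mul_gcd_iff_dvd_mul, ← hg]
    constructor
    · intro h
      exact (Nat.mul_dvd_mul_iff_right hg0).mp (he ▸ h)
    · intro h
      rw [← he]
      exact Nat.mul_dvd_mul h dvd_rfl
  have hfc : (Finset.Ico 1 n).filter (fun k => n ∣ k * m)
      = (Finset.Ioc 0 (n-1)).filter (fun k => e ∣ k) := by
    ext k
    simp only [mem_filter, mem_Ico, mem_Ioc]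
    constructor
    · rintro ⟨⟨h1, h2⟩, h3⟩
      exact ⟨⟨h1, by omega⟩, (key k).mp h3⟩
    · rintro ⟨⟨h1, h2⟩, h3⟩
      exact ⟨⟨h1, by omega⟩, (key k).mpr h3⟩
  rw [hfc, Nat.Ioc_filter_dvd_card_eq_div]
  have hm : e * (g - 1) = e * g - e := Nat.mul_sub_one e g
  have hle : e ≤ e * g := Nat.le_mul_of_pos_right e hg0
  have hsplit : n - 1 = e * (g-1) + (e-1) := by omega
  rw [hsplit, Nat.mul_add_div he0, Nat.div_eq_of_lt (by omega)]
  rw [Nat.gcd_comm]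
  omega



lemma sum_fract_eq (m n : ℕ) (hn : 0 < n) :
    ∑ k ∈ Finset.range n, Int.fract (((k:ℚ) * m) / n) = ((n:ℚ) - Nat.gcd m n) / 2 := by
  set f : ℕ → ℚ := fun k => Int.fract (((k:ℚ) * m) / n) with hf
  have hIco : ∑ k ∈ Finset.range n, f k = ∑ k ∈ Finset.Ico 1 n, f k := by
    rw [range_eq_Ico, sum_eq_sum_Ico_succ_bot hn]
    simp [hf]
  -- reflection
  have hrefl : ∑ k ∈ Finset.Ico 1 n, f k = ∑ k ∈ Finset.Ico 1 n, f (n - k) := by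
    apply Finset.sum_nbij' (fun k => n - k) (fun k => n - k)
    all_goals intro a ha <;> simp only [mem_Ico] at *
    · omega
    · omega
    · omega
    · omega
    · congr 1; omega
  have hpair : ∀ k ∈ Finset.Ico 1 n, f k + f (n - k) = if n ∣ k * m then 0 else 1 := by
    intro k hk
    simp only [mem_Ico] at hk
    by_cases h : n ∣ k * m
    · rw [if_pos h, hf]
      have h1 : Int.fract (((k:ℚ) * m) / n) = 0 := (fract_zero_iff k m n hn).mpr h
      have h2 : Int.fract ((((n-k:ℕ)):ℚ) * m / n) = 0 := by
        rw [fract_zero_iff _ m n hn]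
        have : (n - k) * m = n * m - k * m := by rw [Nat.sub_mul]
        rw [this]
        exact Nat.dvd_sub (Dvd.intro m rfl) h
      simp only [h1, h2]
      ring
    · rw [if_neg h]
      have h1 : f k ≠ 0 := by
        rw [hf]; exact fun hc => h ((fract_zero_iff k m n hn).mp hc)
      have := fract_reflect k m n hn (le_of_lt hk.2) h1
      rw [hf]
      simp only at this ⊢
      rw [this]; ring
  have h2S : ∑ k ∈ Finset.Ico 1 n, f k + ∑ k ∈ Finset.Ico 1 n, f k
      = ((n:ℚ) - Nat.gcd m n) := by
    nth_rewrite 2 [hrefl]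
    rw [← Finset.sum_add_distrib, Finset.sum_congr rfl hpair]
    rw [Finset.sum_ite, Finset.sum_const, Finset.sum_const]
    have hcard1 := card_dvd_Ico m n hn
    have hcard2 : ((Finset.Ico 1 n).filter (fun k => ¬ n ∣ k * m)).card
        = (n - 1) - (Nat.gcd m n - 1) := by
      rw [Finset.filter_not, Finset.card_sdiff_of_subset (Finset.filter_subset _ _), hcard1,
        Nat.card_Ico]
    rw [hcard1, hcard2]
    have hg1 : 1 ≤ Nat.gcd m n := Nat.gcd_pos_of_pos_right m hn
    have hgn : Nat.gcd m n ≤ n := Nat.le_of_dvd hn (Nat.gcd_dvd_right m n)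
    simp only [smul_zero, nsmul_eq_mul, mul_one, zero_add]
    push_cast [Nat.cast_sub, hg1, hgn, (by omega : Nat.gcd m n - 1 ≤ n - 1), hn]
    ring
  show ∑ k ∈ Finset.range n, f k = ((n:ℚ) - Nat.gcd m n) / 2
  rw [hIco]
  linarith [h2S]



/-- Let `G ⊂ SL(3,ℂ)` be cyclic of order `n`, generated by
`g = diag(e^{2πiλ_1/n}, e^{2πiλ_2/n}, e^{2πiλ_3/n})` with `0 < λ_i < n`,
`λ_1+λ_2+λ_3 = n` and `gcd(λ_1,λ_2,λ_3) = 1`.  The element `g^k` has weight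
`wt(g^k) = {kλ_1/n} + {kλ_2/n} + {kλ_3/n}`.  Then the number of elements of `G`
of weight `1` is `(1/2)(n + Σ_i gcd(λ_i,n)) − 2` and the number of elements of
weight `2` is `(1/2)(n − Σ_i gcd(λ_i,n)) + 1`. -/
theorem cyclic_sl3_weight_count (n : ℕ) (lam : Fin 3 → ℕ)
    (hpos : ∀ i, 0 < lam i) (hlt : ∀ i, lam i < n)
    (hsum : lam 0 + lam 1 + lam 2 = n)
    (hgcd : Nat.gcd (Nat.gcd (lam 0) (lam 1)) (lam 2) = 1) :
    ((((Finset.range n).filter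
        (fun k : ℕ => (∑ i, Int.fract (((k : ℚ) * (lam i : ℚ)) / (n : ℚ))) = 1)).card : ℚ)
      = (1 / 2) * ((n : ℚ) + ∑ i, (Nat.gcd (lam i) n : ℚ)) - 2)
    ∧ ((((Finset.range n).filter
        (fun k : ℕ => (∑ i, Int.fract (((k : ℚ) * (lam i : ℚ)) / (n : ℚ))) = 2)).card : ℚ)
      = (1 / 2) * ((n : ℚ) - ∑ i, (Nat.gcd (lam i) n : ℚ)) + 1) := by
  have hn : 0 < n := (hpos 0).trans (hlt 0)
  set wt : ℕ → ℚ := fun k => ∑ i, Int.fract (((k : ℚ) * (lam i : ℚ)) / (n : ℚ)) with hwt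
  -- wt 0 = 0
  have hwt0 : wt 0 = 0 := by simp [hwt]
  -- wt k ∈ {1, 2} for 1 ≤ k < n
  have h12 : ∀ k ∈ Finset.Ico 1 n, wt k = 1 ∨ wt k = 2 := by
    intro k hk
    simp only [mem_Ico] at hk
    -- wt k is an integer
    set x : Fin 3 → ℚ := fun i => ((k : ℚ) * (lam i : ℚ)) / (n : ℚ) with hx
    have hxsum : ∑ i, x i = (k : ℚ) := by
      have hn' : (n:ℚ) ≠ 0 := Nat.cast_ne_zero.mpr hn.ne'
      rw [Fin.sum_univ_three]
      simp only [hx]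
      field_simp
      have : ((lam 0 : ℚ) + lam 1 + lam 2) = (n:ℚ) := by exact_mod_cast congrArg (Nat.cast : ℕ → ℚ) hsum
      linear_combination (k:ℚ) * this
    have hint : wt k = ((k : ℤ) - (⌊x 0⌋ + ⌊x 1⌋ + ⌊x 2⌋) : ℤ) := by
      simp only [hwt, Int.fract, Fin.sum_univ_three]
      push_cast
      rw [show ((k:ℚ)*(lam 0:ℚ)/n = x 0) from rfl]
      rw [show ((k:ℚ)*(lam 1:ℚ)/n = x 1) from rfl]
      rw [show ((k:ℚ)*(lam 2:ℚ)/n = x 2) from rfl]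
      have := hxsum
      rw [Fin.sum_univ_three] at this
      linarith
    have hnonneg : ∀ i, 0 ≤ Int.fract (x i) := fun i => Int.fract_nonneg _
    have hlt1 : ∀ i, Int.fract (x i) < 1 := fun i => Int.fract_lt_one _
    have hwtval : wt k = Int.fract (x 0) + Int.fract (x 1) + Int.fract (x 2) := by
      simp only [hwt, Fin.sum_univ_three]
      rfl
    have hlb : 0 ≤ wt k := by rw [hwtval]; have := hnonneg 0; have := hnonneg 1; have := hnonneg 2; linarith
    have hub : wt k < 3 := by rw [hwtval]; have := hlt1 0; have := hlt1 1; have := hlt1 2; linarith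
    have hne : wt k ≠ 0 := by
      intro hzero
      rw [hwtval] at hzero
      have h0 := hnonneg 0; have h1 := hnonneg 1; have h2 := hnonneg 2
      have hf0 : Int.fract (x 0) = 0 := by linarith
      have hf1 : Int.fract (x 1) = 0 := by linarith
      have hf2 : Int.fract (x 2) = 0 := by linarith
      have hf : ∀ i, Int.fract (x i) = 0 := by
        intro i
        fin_cases i
        · exact hf0
        · exact hf1
        · exact hf2
      have hdvd : ∀ i, n ∣ k * lam i := by
        intro i
        exact (fract_zero_iff k (lam i) n hn).mp (hf i)
      have : n ∣ k := by
        have h01 : n ∣ Nat.gcd (k * lam 0) (k * lam 1) := Nat.dvd_gcd (hdvd 0) (hdvd 1)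
        have h012 : n ∣ Nat.gcd (Nat.gcd (k * lam 0) (k * lam 1)) (k * lam 2) :=
          Nat.dvd_gcd h01 (hdvd 2)
        rwa [Nat.gcd_mul_left, Nat.gcd_mul_left, hgcd, Nat.mul_one] at h012
      have := Nat.le_of_dvd (by omega) this
      omega
    -- conclude in ℤ
    set J : ℤ := (k : ℤ) - (⌊x 0⌋ + ⌊x 1⌋ + ⌊x 2⌋) with hJ
    have hJ0 : 0 ≤ J := by exact_mod_cast hint ▸ hlb
    have hJ3 : J < 3 := by exact_mod_cast hint ▸ hub
    have hJne : J ≠ 0 := by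
      intro hc
      exact hne (by rw [hint, hc]; norm_num)
    interval_cases J
    · exact absurd rfl hJne
    · exact Or.inl (by rw [hint]; norm_num)
    · exact Or.inr (by rw [hint]; norm_num)
  set A := (Finset.range n).filter (fun k : ℕ => wt k = 1) with hA
  set B := (Finset.range n).filter (fun k : ℕ => wt k = 2) with hB
  -- card equation 1
  have hcard : (A.card : ℚ) + B.card = (n : ℚ) - 1 := by
    have hdisj : Disjoint A B := by
      rw [Finset.disjoint_filter]
      intro k _ h1 h2
      rw [h1] at h2; norm_num at h2
    have hunion : A ∪ B = Finset.Ico 1 n := by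
      rw [hA, hB, ← Finset.filter_or]
      ext k
      simp only [mem_filter, mem_range, mem_Ico]
      constructor
      · rintro ⟨hkn, hk⟩
        refine ⟨?_, hkn⟩
        by_contra hc
        push_neg at hc
        interval_cases k
        · rcases hk with h | h <;> rw [hwt0] at h <;> norm_num at h
      · intro hk
        exact ⟨hk.2, h12 k (by simp only [mem_Ico]; exact hk)⟩
    have := Finset.card_union_of_disjoint hdisj
    rw [hunion, Nat.card_Ico] at this
    have hnat : A.card + B.card = n - 1 := this.symm
    have hq : ((A.card + B.card : ℕ) : ℚ) = ((n - 1 : ℕ) : ℚ) := by exact_mod_cast congrArg (Nat.cast : ℕ → ℚ) hnat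
    push_cast [Nat.cast_sub hn] at hq
    linarith
  -- sum equation
  have hsum2 : (A.card : ℚ) + 2 * B.card = ∑ i, ((n:ℚ) - Nat.gcd (lam i) n) / 2 := by
    have hswap : ∑ k ∈ Finset.range n, wt k = ∑ i, ((n:ℚ) - Nat.gcd (lam i) n) / 2 := by
      rw [hwt]
      rw [Finset.sum_comm]
      exact Finset.sum_congr rfl fun i _ => sum_fract_eq (lam i) n hn
    rw [← hswap]
    have hpt : ∀ k ∈ Finset.range n, wt k
        = (if wt k = 1 then (1:ℚ) else 0) + (if wt k = 2 then (2:ℚ) else 0) := by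
      intro k hk
      simp only [mem_range] at hk
      rcases Nat.eq_zero_or_pos k with rfl | hk1
      · rw [hwt0]; norm_num
      · rcases h12 k (by simp only [mem_Ico]; omega) with h | h <;> rw [h] <;> norm_num
    rw [Finset.sum_congr rfl hpt, Finset.sum_add_distrib]
    have e1 : ∑ k ∈ Finset.range n, (if wt k = 1 then (1:ℚ) else 0) = A.card := by
      rw [Finset.sum_boole]
    have e2 : ∑ k ∈ Finset.range n, (if wt k = 2 then (2:ℚ) else 0) = 2 * B.card := by
      have h2' : ∀ k, (if wt k = 2 then (2:ℚ) else 0) = 2 * (if wt k = 2 then (1:ℚ) else 0) := by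
        intro k; split <;> ring
      rw [Finset.sum_congr rfl (fun k _ => h2' k), ← Finset.mul_sum, Finset.sum_boole]
    rw [e1, e2]
  constructor
  · show (A.card : ℚ) = _
    rw [Fin.sum_univ_three] at hsum2 ⊢
    linarith
  · show (B.card : ℚ) = _
    rw [Fin.sum_univ_three] at hsum2 ⊢
    linarith
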